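/- arXiv:math/0504439 — 4 statements merged into one kernel-verified Lean document; each statement's English description precedes it below -/
import Mathlib

section
/- The function E(s) = x(s)^{2n-1} cos σ(s) / sqrt(x(s)^2 sin^2 σ(s) + cos^2 σ(s)) − H x(s)^{2n} is constant along any solution (x, t, σ) of the system x' = sin σ, t' = cos σ, σ' = (2n−1) cos^3 σ / x^3 + 2(n−1) sin^2 σ cos σ / x − 2nH (x^2 sin^2 σ + cos^2 σ)^{3/2} / x^2, wherever x > 0. -/
open Real Set

/-!
Along the flow, `Q = x² sin² σ + cos² σ` has `Q' = 2 sin σ (x sin² σ + (x² - 1) cos σ σ')`.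
In the derivative of `E` the `σ'`-terms then carry the coefficient `Q + (x² - 1) cos² σ = x²`,
so `E'` is a multiple of `x³ σ' - (2n-1) cos³ σ - 2(n-1) sin² σ cos σ x² + 2nH Q^{3/2} x`,
which is zero by the equation for `σ'`. A function with zero derivative on an interval is constant.
-/

-- The paper's energy `E` and right-hand side of the `σ'`-equation, written with `m = 2n - 1`.
noncomputable def cmcEnergy (m : ℕ) (H X θ : ℝ) : ℝ :=
  X ^ m * cos θ / √(X ^ 2 * sin θ ^ 2 + cos θ ^ 2) - H * X ^ (m + 1)

noncomputable def cmcAngleRate (m : ℕ) (H X θ : ℝ) : ℝ :=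
  m * cos θ ^ 3 / X ^ 3 + (m - 1) * sin θ ^ 2 * cos θ / X
    - (m + 1) * H * (X ^ 2 * sin θ ^ 2 + cos θ ^ 2) ^ ((3 : ℝ) / 2) / X ^ 2

theorem natCast_mul_pow_sub_one (m : ℕ) {X : ℝ} (hX : X ≠ 0) :
    (m : ℝ) * X ^ (m - 1) = m * X ^ m / X := by
  cases m with
  | zero => simp
  | succ k => field_simp; simp [pow_succ]

theorem sq_mul_sin_sq_add_cos_sq_pos {X : ℝ} (hX : 0 < X) (θ : ℝ) :
    0 < X ^ 2 * sin θ ^ 2 + cos θ ^ 2 := by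
  rcases eq_or_ne (sin θ) 0 with h | h
  · have hcos : cos θ ^ 2 = 1 := by simpa [h] using sin_sq_add_cos_sq θ
    simp [h, hcos]
  · positivity

theorem hasDerivAt_cmcEnergy {m : ℕ} {H : ℝ} {x σ : ℝ → ℝ} {s : ℝ} (hxs : 0 < x s)
    (hx : HasDerivAt x (sin (σ s)) s) (hσ : HasDerivAt σ (cmcAngleRate m H (x s) (σ s)) s) :
    HasDerivAt (fun u ↦ cmcEnergy m H (x u) (σ u)) 0 s := by
  set X := x s
  set S := sin (σ s)
  set C := cos (σ s)
  set W := cmcAngleRate m H X (σ s) with hW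
  have hQ : 0 < X ^ 2 * S ^ 2 + C ^ 2 := sq_mul_sin_sq_add_cos_sq_pos hxs (σ s)
  set r := √(X ^ 2 * S ^ 2 + C ^ 2) with hr_def
  have hr : 0 < r := sqrt_pos.2 hQ
  have hr2 : r ^ 2 = X ^ 2 * S ^ 2 + C ^ 2 := sq_sqrt hQ.le
  have hWX : W * X ^ 3 = m * C ^ 3 + (m - 1) * S ^ 2 * C * X ^ 2 - (m + 1) * H * r ^ 3 * X := by
    rw [hW, cmcAngleRate, rpow_div_two_eq_sqrt _ hQ.le, ← hr_def]
    field_simp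
    norm_cast
  have hsin : HasDerivAt (fun u ↦ sin (σ u)) (C * W) s := (hasDerivAt_sin _).comp s hσ
  have hcos : HasDerivAt (fun u ↦ cos (σ u)) (-S * W) s := (hasDerivAt_cos _).comp s hσ
  have hpow : HasDerivAt (fun u ↦ x u ^ m) (m * X ^ m * S / X) s := by
    refine (hx.fun_pow m).congr_deriv ?_
    rw [natCast_mul_pow_sub_one m hxs.ne']; ring
  have hQ' : HasDerivAt (fun u ↦ x u ^ 2 * sin (σ u) ^ 2 + cos (σ u) ^ 2)
      (2 * S * (X * S ^ 2 + (X ^ 2 - 1) * C * W)) s := by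
    refine (((hx.fun_pow 2).fun_mul (hsin.fun_pow 2)).add (hcos.fun_pow 2)).congr_deriv ?_
    push_cast; ring
  refine (((hpow.fun_mul hcos).fun_div (hQ'.sqrt hQ.ne') hr.ne').fun_sub
    ((hx.fun_pow (m + 1)).const_mul H)).congr_deriv ?_
  rw [show x s = X from rfl, show cos (σ s) = C from rfl, show sin (σ s) = S from rfl, ← hr_def,
    Nat.add_sub_cancel]
  field_simp
  push_cast
  linear_combination
    (X ^ m * S) * ((m * C - X * W) * hr2 - X ^ 3 * W * sin_sq_add_cos_sq (σ s) - hWX)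

theorem energy_first_integral_general (n : ℕ) (hn : 1 ≤ n) (H : ℝ) (a b : ℝ)
    (x σ : ℝ → ℝ)
    (hx : ∀ s ∈ Ioo a b, 0 < x s)
    (hx' : ∀ s ∈ Ioo a b, HasDerivAt x (Real.sin (σ s)) s)
    (hσ' : ∀ s ∈ Ioo a b, HasDerivAt σ
      ((2*(n:ℝ)-1) * Real.cos (σ s)^3 / (x s)^3
        + 2*((n:ℝ)-1) * Real.sin (σ s)^2 * Real.cos (σ s) / x s
        - 2*(n:ℝ)*H*((x s)^2*Real.sin (σ s)^2 + Real.cos (σ s)^2)^((3:ℝ)/2)/(x s)^2) s) :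
    ∀ s₁ ∈ Ioo a b, ∀ s₂ ∈ Ioo a b,
      x s₁ ^ (2*n-1) * Real.cos (σ s₁) /
          Real.sqrt ((x s₁)^2 * Real.sin (σ s₁)^2 + Real.cos (σ s₁)^2) - H * x s₁ ^ (2*n)
        = x s₂ ^ (2*n-1) * Real.cos (σ s₂) /
          Real.sqrt ((x s₂)^2 * Real.sin (σ s₂)^2 + Real.cos (σ s₂)^2) - H * x s₂ ^ (2*n) := by
  have hm : 2 * n - 1 + 1 = 2 * n := by omega
  have hm_cast : ((2 * n - 1 : ℕ) : ℝ) = 2 * n - 1 := by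
    rw [Nat.cast_sub (by omega)]; push_cast; ring
  have hE : ∀ s ∈ Ioo a b, HasDerivAt (fun u ↦ cmcEnergy (2 * n - 1) H (x u) (σ u)) 0 s := by
    intro s hs
    refine hasDerivAt_cmcEnergy (hx s hs) (hx' s hs) ((hσ' s hs).congr_deriv ?_)
    rw [cmcAngleRate, hm_cast]
    ring
  intro s₁ hs₁ s₂ hs₂
  have hconst := isOpen_Ioo.is_const_of_deriv_eq_zero isPreconnected_Ioo
    (fun s hs ↦ (hE s hs).differentiableAt.differentiableWithinAt)
    (fun s hs ↦ (hE s hs).deriv) hs₁ hs₂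
  simpa only [cmcEnergy, hm] using hconst

/-- The energy `E(s) = x^{2n-1} cos σ / sqrt(x² sin²σ + cos²σ) - H x^{2n}` is constant
along any solution of the CMC ODE system for rotationally invariant hypersurfaces in ℍⁿ. -/
theorem energy_first_integral (n : ℕ) (hn : 1 ≤ n) (H : ℝ) (a b : ℝ)
    (x t σ : ℝ → ℝ)
    (hx : ∀ s ∈ Ioo a b, 0 < x s)
    (hx' : ∀ s ∈ Ioo a b, HasDerivAt x (Real.sin (σ s)) s)
    (ht' : ∀ s ∈ Ioo a b, HasDerivAt t (Real.cos (σ s)) s)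
    (hσ' : ∀ s ∈ Ioo a b, HasDerivAt σ
      ((2*(n:ℝ)-1) * Real.cos (σ s)^3 / (x s)^3
        + 2*((n:ℝ)-1) * Real.sin (σ s)^2 * Real.cos (σ s) / x s
        - 2*(n:ℝ)*H*((x s)^2*Real.sin (σ s)^2 + Real.cos (σ s)^2)^((3:ℝ)/2)/(x s)^2) s) :
    ∀ s₁ ∈ Ioo a b, ∀ s₂ ∈ Ioo a b,
      x s₁ ^ (2*n-1) * Real.cos (σ s₁) /
          Real.sqrt ((x s₁)^2 * Real.sin (σ s₁)^2 + Real.cos (σ s₁)^2) - H * x s₁ ^ (2*n)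
        = x s₂ ^ (2*n-1) * Real.cos (σ s₂) /
          Real.sqrt ((x s₂)^2 * Real.sin (σ s₂)^2 + Real.cos (σ s₂)^2) - H * x s₂ ^ (2*n) :=
  energy_first_integral_general n hn H a b x σ hx hx' hσ'
end

section
/- Let n ≥ 1, H > 0, E < 0, and suppose 0 < x1 < x2 satisfy x^{4n−2} − (E + H x^{2n})^2 = 0 at x = x1 and x = x2, with x^{4n−2} − (E + H x^{2n})^2 > 0 on (x1, x2). If the improper integral t_2 = ∫_{x1}^{x2} (E + H x^{2n}) x / sqrt(x^{4n−2} − (E + H x^{2n})^2) dx converges, then t_2 = (1/(2nH)) ∫_{x1}^{x2} (2(n−1) x^{−2n+1} (E + H x^{2n})^2 + x^{2n−1}) / sqrt(x^{4n−2} − (E + H x^{2n})^2) dx, and in particular t_2 > 0. -/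
open Real Set MeasureTheory intervalIntegral

/-!
With `c = 2nH` and `Q(x) = x^{4n-2} - (E + Hx^{2n})²`, the integrand `g` of the right-hand side
satisfies `g = c f + (x^{-2(n-1)} √Q)'` on `(x₁, x₂)`, where `f` is the integrand of `t₂`. Since
`√Q` vanishes at both endpoints, `ψ = x^{-2(n-1)} √Q + c ∫_{x₁}^x f` is continuous on `[x₁, x₂]`
with `ψ(x₁) = 0`, `ψ(x₂) = c t₂` and `ψ' = g > 0`. A nonnegative derivative is automatically
integrable, so the fundamental theorem of calculus gives `∫ g = c t₂`, and `∫ g > 0`.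
-/

section PrimitiveCorrection

variable {a b c : ℝ} {φ f g : ℝ → ℝ}

theorem hasDerivAt_add_const_mul_primitive (hab : a ≤ b) (hf : IntervalIntegrable f volume a b)
    (hfc : ContinuousOn f (Ioo a b)) (hφ : ∀ x ∈ Ioo a b, HasDerivAt φ (g x - c * f x) x) :
    ∀ x ∈ Ioo a b, HasDerivAt (fun y => φ y + c * ∫ t in a..y, f t) (g x) x := by
  intro x hx
  have hF : HasDerivAt (fun y => ∫ t in a..y, f t) (f x) x := by
    refine integral_hasDerivAt_right (hf.mono_set (uIcc_subset_uIcc left_mem_uIcc ?_))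
      (hfc.stronglyMeasurableAtFilter isOpen_Ioo x hx) (hfc.continuousAt (isOpen_Ioo.mem_nhds hx))
    rw [uIcc_of_le hab]
    exact Ioo_subset_Icc_self hx
  exact ((hφ x hx).add (hF.const_mul c)).congr_deriv (by ring)

theorem integral_eq_sub_add_const_mul_integral_of_nonneg (hab : a ≤ b)
    (hφc : ContinuousOn φ (Icc a b)) (hφ : ∀ x ∈ Ioo a b, HasDerivAt φ (g x - c * f x) x)
    (hf : IntervalIntegrable f volume a b) (hfc : ContinuousOn f (Ioo a b))
    (hg : ∀ x ∈ Ioo a b, 0 ≤ g x) :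
    IntervalIntegrable g volume a b ∧ ∫ x in a..b, g x = φ b - φ a + c * ∫ x in a..b, f x := by
  have hψ := hasDerivAt_add_const_mul_primitive hab hf hfc hφ
  have hψc : ContinuousOn (fun y => φ y + c * ∫ t in a..y, f t) (Icc a b) := by
    have hF := continuousOn_primitive_interval' hf (left_mem_uIcc (a := a) (b := b))
    rw [uIcc_of_le hab] at hF
    exact hφc.add (hF.const_smul c)
  have hgi : IntervalIntegrable g volume a b := by
    rw [intervalIntegrable_iff_integrableOn_Ioc_of_le hab]
    exact integrableOn_deriv_of_nonneg hψc hψ hg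
  refine ⟨hgi, ?_⟩
  rw [integral_eq_sub_of_hasDerivAt_of_le hab hψc hψ hgi, integral_same]
  ring

end PrimitiveCorrection

/-! The nodoid quantities are indexed by `m = n - 1`, so that no exponent needs a truncated
natural subtraction. -/

noncomputable section

namespace Nodoid

variable (m : ℕ) (H E : ℝ)

def radicand (x : ℝ) : ℝ := x ^ (4*m+2) - (E + H*x^(2*m+2))^2

def periodIntegrand (x : ℝ) : ℝ := (E + H*x^(2*m+2)) * x / √(radicand m H E x)

def positiveIntegrand (x : ℝ) : ℝ :=
  (2*m * (x^(2*m+1))⁻¹ * (E + H*x^(2*m+2))^2 + x^(2*m+1)) / √(radicand m H E x)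

def potential (x : ℝ) : ℝ := (x^(2*m))⁻¹ * √(radicand m H E x)

variable {m H E}

theorem continuousOn_potential : ContinuousOn (potential m H E) (Ioi 0) := by
  refine ContinuousOn.mul ?_ (by unfold radicand; fun_prop)
  exact (continuous_pow (2*m)).continuousOn.inv₀ fun x hx => pow_ne_zero _ (ne_of_gt hx)

theorem continuousOn_periodIntegrand {s : Set ℝ} (hQ : ∀ x ∈ s, 0 < radicand m H E x) :
    ContinuousOn (periodIntegrand m H E) s := by
  refine ContinuousOn.div (by fun_prop) (by unfold radicand; fun_prop) fun x hx => ?_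
  exact (sqrt_pos.2 (hQ x hx)).ne'

theorem positiveIntegrand_pos {x : ℝ} (hx : 0 < x) (hQ : 0 < radicand m H E x) :
    0 < positiveIntegrand m H E x := by
  unfold positiveIntegrand
  have : 0 < x^(2*m+1) := pow_pos hx _
  positivity

theorem hasDerivAt_potential {x : ℝ} (hx : 0 < x) (hQ : 0 < radicand m H E x) :
    HasDerivAt (potential m H E)
      (positiveIntegrand m H E x - 2*(m+1)*H * periodIntegrand m H E x) x := by
  have hQ' : HasDerivAt (radicand m H E) _ x := (hasDerivAt_pow (4*m+2) x).sub
    ((((hasDerivAt_pow (2*m+2) x).const_mul H).const_add E).pow 2)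
  have hinv : HasDerivAt (fun y : ℝ => (y^(2*m))⁻¹) (-(2*m) * (x^(2*m+1))⁻¹) x := by
    have hfun : (fun y : ℝ => (y^(2*m))⁻¹) = fun y : ℝ => y ^ (-(2*m:ℤ)) := by
      funext y; rw [zpow_neg]; norm_cast
    have h := hasDerivAt_zpow (-(2*m:ℤ)) x (Or.inl hx.ne')
    rw [show -(2*m:ℤ) - 1 = -((2*m+1 : ℕ) : ℤ) by push_cast; ring, zpow_neg, zpow_natCast] at h
    rw [hfun]
    simpa using h
  refine (hinv.mul (hQ'.sqrt hQ.ne')).congr_deriv ?_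
  have hss : √(radicand m H E x) ^ 2 = radicand m H E x := sq_sqrt hQ.le
  have hs : 0 < √(radicand m H E x) := sqrt_pos.2 hQ
  unfold positiveIntegrand periodIntegrand
  unfold radicand at hs hss ⊢
  generalize √(x ^ (4*m+2) - (E + H*x^(2*m+2))^2) = s at hs hss ⊢
  push_cast
  field_simp
  linear_combination (-4*(m:ℝ) * x^(2*m)) * hss

theorem integral_periodIntegrand_eq_and_pos {x₁ x₂ : ℝ} (hH : 0 < H) (hx₁ : 0 < x₁) (h12 : x₁ < x₂)
    (hroot₁ : radicand m H E x₁ = 0) (hroot₂ : radicand m H E x₂ = 0)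
    (hpos : ∀ x ∈ Ioo x₁ x₂, 0 < radicand m H E x)
    (hint : IntegrableOn (periodIntegrand m H E) (Ioo x₁ x₂)) :
    ∫ x in x₁..x₂, periodIntegrand m H E x
        = (2*(m+1)*H)⁻¹ * ∫ x in x₁..x₂, positiveIntegrand m H E x
      ∧ 0 < ∫ x in x₁..x₂, positiveIntegrand m H E x := by
  have hg : ∀ x ∈ Ioo x₁ x₂, 0 < positiveIntegrand m H E x :=
    fun x hx => positiveIntegrand_pos (hx₁.trans hx.1) (hpos x hx)
  have hfi : IntervalIntegrable (periodIntegrand m H E) volume x₁ x₂ := by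
    rw [intervalIntegrable_iff_integrableOn_Ioc_of_le h12.le]
    exact hint.congr_set_ae Ioo_ae_eq_Ioc.symm
  obtain ⟨hgi, hFTC⟩ := integral_eq_sub_add_const_mul_integral_of_nonneg h12.le
    (continuousOn_potential.mono fun x hx => hx₁.trans_le hx.1)
    (fun x hx => hasDerivAt_potential (hx₁.trans hx.1) (hpos x hx)) hfi
    (continuousOn_periodIntegrand hpos) (fun x hx => (hg x hx).le)
  have hc : (0:ℝ) < 2*(m+1)*H := by positivity
  refine ⟨?_, intervalIntegral_pos_of_pos_on hgi hg h12⟩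
  rw [hFTC, potential, potential, hroot₁, hroot₂]
  simp only [sqrt_zero, mul_zero, sub_self, zero_add]
  rw [inv_mul_cancel_left₀ hc.ne']

end Nodoid

end

theorem nodoid_period_positive_general (n : ℕ) (hn : 1 ≤ n) (H E : ℝ) (hH : 0 < H)
    (x₁ x₂ : ℝ) (hx₁ : 0 < x₁) (h12 : x₁ < x₂)
    (hroot₁ : x₁ ^ (4*n-2) - (E + H*x₁^(2*n))^2 = 0)
    (hroot₂ : x₂ ^ (4*n-2) - (E + H*x₂^(2*n))^2 = 0)
    (hpos : ∀ x ∈ Ioo x₁ x₂, 0 < x ^ (4*n-2) - (E + H*x^(2*n))^2)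
    (hint : IntegrableOn
      (fun x : ℝ => (E + H*x^(2*n)) * x / Real.sqrt (x ^ (4*n-2) - (E + H*x^(2*n))^2))
      (Ioo x₁ x₂) volume) :
    (∫ x in x₁..x₂, (E + H*x^(2*n)) * x / Real.sqrt (x ^ (4*n-2) - (E + H*x^(2*n))^2))
      = (1/(2*(n:ℝ)*H)) *
        ∫ x in x₁..x₂,
          (2*((n:ℝ)-1) * x ^ (1 - 2*(n:ℤ)) * (E + H*x^(2*n))^2 + x^(2*n-1))
            / Real.sqrt (x ^ (4*n-2) - (E + H*x^(2*n))^2)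
    ∧ 0 < ∫ x in x₁..x₂,
        (E + H*x^(2*n)) * x / Real.sqrt (x ^ (4*n-2) - (E + H*x^(2*n))^2) := by
  obtain ⟨m, rfl⟩ : ∃ m, n = m + 1 := ⟨n - 1, (Nat.succ_pred_eq_of_pos hn).symm⟩
  simp only [show 4*(m+1)-2 = 4*m+2 by omega, show 2*(m+1) = 2*m+2 by omega,
    show 2*m+2-1 = 2*m+1 by omega, show 1 - 2*((m:ℤ)+1) = -((2*m+1 : ℕ) : ℤ) by push_cast; ring,
    zpow_neg, Nat.cast_succ, add_sub_cancel_right, one_div]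
    at hroot₁ hroot₂ hpos hint ⊢
  obtain ⟨hperiod, hright⟩ :=
    Nodoid.integral_periodIntegrand_eq_and_pos hH hx₁ h12 hroot₁ hroot₂ hpos hint
  refine ⟨hperiod, ?_⟩
  exact hperiod ▸ mul_pos (by positivity) hright

/-- The period integral of a nodoid solution: if the improper integral
`t₂ = ∫_{x₁}^{x₂} (E+Hx^{2n})x/√(x^{4n-2}-(E+Hx^{2n})²) dx` converges, then it equals
`(1/(2nH)) ∫_{x₁}^{x₂} (2(n-1)x^{-2n+1}(E+Hx^{2n})² + x^{2n-1})/√(...) dx`, and is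
strictly positive. -/
theorem nodoid_period_positive (n : ℕ) (hn : 1 ≤ n) (H E : ℝ) (hH : 0 < H) (hE : E < 0)
    (x₁ x₂ : ℝ) (hx₁ : 0 < x₁) (h12 : x₁ < x₂)
    (hroot₁ : x₁ ^ (4*n-2) - (E + H*x₁^(2*n))^2 = 0)
    (hroot₂ : x₂ ^ (4*n-2) - (E + H*x₂^(2*n))^2 = 0)
    (hpos : ∀ x ∈ Ioo x₁ x₂, 0 < x ^ (4*n-2) - (E + H*x^(2*n))^2)
    (hint : IntegrableOn
      (fun x : ℝ => (E + H*x^(2*n)) * x / Real.sqrt (x ^ (4*n-2) - (E + H*x^(2*n))^2))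
      (Ioo x₁ x₂) volume) :
    (∫ x in x₁..x₂, (E + H*x^(2*n)) * x / Real.sqrt (x ^ (4*n-2) - (E + H*x^(2*n))^2))
      = (1/(2*(n:ℝ)*H)) *
        ∫ x in x₁..x₂,
          (2*((n:ℝ)-1) * x ^ (1 - 2*(n:ℤ)) * (E + H*x^(2*n))^2 + x^(2*n-1))
            / Real.sqrt (x ^ (4*n-2) - (E + H*x^(2*n))^2)
    ∧ 0 < ∫ x in x₁..x₂,
        (E + H*x^(2*n)) * x / Real.sqrt (x ^ (4*n-2) - (E + H*x^(2*n))^2) :=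
  nodoid_period_positive_general n hn H E hH x₁ x₂ hx₁ h12 hroot₁ hroot₂ hpos hint
end

section
/- Let n ≥ 1, H > 0, E = 0, and let (x, t, σ) be a solution of the ODE system x' = sin σ, t' = cos σ, σ' = (2n−1) cos^3 σ / x^3 + 2(n−1) sin^2 σ cos σ / x − 2nH (x^2 sin^2 σ + cos^2 σ)^{3/2} / x^2 with energy 0 (i.e. x^{2n−1} cos σ = H x^{2n} sqrt(x^2 sin^2 σ + cos^2 σ)) and x > 0. Then along the solution σ' = cos^3 σ (H² x² − 2) / (H² x^5), and since x ≤ 1/H this quantity is strictly negative. -/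
open Real Set

/-- For `H > 0` and energy `E = 0`, along a solution of the CMC system the angle satisfies
`σ' = cos³σ (H²x² - 2)/(H²x⁵)`, which is strictly negative. -/
theorem sphere_angle_decreasing (n : ℕ) (hn : 1 ≤ n) (H : ℝ) (hH : 0 < H) (a b : ℝ)
    (x t σ : ℝ → ℝ)
    (hx : ∀ s ∈ Ioo a b, 0 < x s)
    (hx' : ∀ s ∈ Ioo a b, HasDerivAt x (Real.sin (σ s)) s)
    (ht' : ∀ s ∈ Ioo a b, HasDerivAt t (Real.cos (σ s)) s)
    (hσ' : ∀ s ∈ Ioo a b, HasDerivAt σ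
      ((2*(n:ℝ)-1) * Real.cos (σ s)^3 / (x s)^3
        + 2*((n:ℝ)-1) * Real.sin (σ s)^2 * Real.cos (σ s) / x s
        - 2*(n:ℝ)*H*((x s)^2*Real.sin (σ s)^2 + Real.cos (σ s)^2)^((3:ℝ)/2)/(x s)^2) s)
    (hE : ∀ s ∈ Ioo a b,
      x s ^ (2*n-1) * Real.cos (σ s)
        = H * x s ^ (2*n) * Real.sqrt ((x s)^2 * Real.sin (σ s)^2 + Real.cos (σ s)^2)) :
    ∀ s ∈ Ioo a b,
      HasDerivAt σ (Real.cos (σ s)^3 * (H^2*(x s)^2 - 2) / (H^2*(x s)^5)) s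
      ∧ Real.cos (σ s)^3 * (H^2*(x s)^2 - 2) / (H^2*(x s)^5) < 0 := by
  intro p hp
  set X := x p with hXdef
  set C := Real.cos (σ p) with hCdef
  set S := Real.sin (σ p) with hSdef
  have hX : 0 < X := hx p hp
  have hX0 : X ≠ 0 := ne_of_gt hX
  have hH0 : H ≠ 0 := ne_of_gt hH
  have hpyth : S ^ 2 + C ^ 2 = 1 := sin_sq_add_cos_sq (σ p)
  set Q : ℝ := X ^ 2 * S ^ 2 + C ^ 2 with hQdef
  have hQ0 : 0 ≤ Q := by positivity
  have hQpos : 0 < Q := by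
    rcases eq_or_ne S 0 with hS | hS
    · rw [hQdef, hS]
      nlinarith [hpyth]
    · have hS2pos : 0 < S ^ 2 := by positivity
      rw [hQdef]
      nlinarith [mul_pos (pow_pos hX 2) hS2pos, sq_nonneg C]
  have hsqrtpos : 0 < Real.sqrt Q := Real.sqrt_pos.mpr hQpos
  -- derive C = H * X * sqrt Q
  have hEp := hE p hp
  have hpow : X ^ (2 * n) = X ^ (2 * n - 1) * X := by
    rw [← pow_succ]
    congr 1
    omega
  have hE' : C = H * X * Real.sqrt Q := by
    have h1 : X ^ (2 * n - 1) * C = X ^ (2 * n - 1) * (H * X * Real.sqrt Q) := by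
      rw [hEp, hpow]; ring
    exact mul_left_cancel₀ (pow_ne_zero _ hX0) h1
  have hC : 0 < C := by
    rw [hE']; positivity
  have hsq : C ^ 2 = H ^ 2 * X ^ 2 * Q := by
    rw [hE']
    rw [mul_pow, mul_pow, Real.sq_sqrt hQ0]
  have hHX : H ^ 2 * X ^ 2 ≤ 1 := by
    have h1 : H ^ 2 * X ^ 4 * S ^ 2 = C ^ 2 * (1 - H ^ 2 * X ^ 2) := by
      rw [hQdef] at hsq; nlinarith [hsq]
    nlinarith [sq_nonneg S, sq_nonneg (H * X * S), hC, sq_nonneg C, mul_pos hC hC]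
  have hrpow : Q ^ ((3:ℝ)/2) = (Real.sqrt Q) ^ 3 := by
    rw [Real.sqrt_eq_rpow, ← Real.rpow_natCast (Q ^ ((1:ℝ)/2)) 3, ← Real.rpow_mul hQ0]
    norm_num
  have hsqrt_eq : Real.sqrt Q = C / (H * X) := by
    rw [hE']; field_simp
  have hS2 : H ^ 2 * X ^ 4 * S ^ 2 = C ^ 2 * (1 - H ^ 2 * X ^ 2) := by
    rw [hQdef] at hsq; nlinarith [hsq]
  have hrw : (2*(n:ℝ)-1) * C^3 / X^3 + 2*((n:ℝ)-1) * S^2 * C / X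
        - 2*(n:ℝ)*H*Q^((3:ℝ)/2)/X^2 = C^3 * (H^2*X^2 - 2) / (H^2*X^5) := by
    have hS2' : S ^ 2 = C ^ 2 * (1 - H ^ 2 * X ^ 2) / (H ^ 2 * X ^ 4) := by
      rw [eq_div_iff (by positivity)]
      linarith [hS2]
    rw [hrpow, hsqrt_eq, hS2']
    field_simp
    ring
  refine ⟨?_, ?_⟩
  · have := hσ' p hp
    rwa [hrw] at this
  · apply div_neg_of_neg_of_pos
    · have : H ^ 2 * X ^ 2 - 2 < 0 := by linarith
      exact mul_neg_of_pos_of_neg (by positivity) this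
    · positivity
end

section
/- For E > 0, the surface in ℍ¹ given by t² = E²(|z|² − E²), |z| ≥ E (i.e. the graphs t = ± sqrt(E²(x² + y² − E²))), is a minimal surface: the function f(x,y) = sqrt(E²(x² + y² − E²)) satisfies (f_y + x)² f_{xx} + (f_x − y)² f_{yy} − 2 (f_x − y)(f_y + x) f_{xy} = 0 wherever x² + y² > E². -/
/-!
Since the domain `x² + y² > E²` is open, the given partial derivatives are determined by uniqueness
of derivatives. With `r = √(E²(x² + y² - E²))` they are `f_x = E²x/r`, `f_y = E²y/r`,
`f_xx = E⁴(y² - E²)/r³`, `f_yy = E⁴(x² - E²)/r³` and `f_xy = -E⁴xy/r³`; substituted into the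
operator they give a rational expression in `x, y, r` that vanishes modulo `r² = E²(x² + y² - E²)`.
-/

open Real Filter Topology

section SqrtQuadratic

variable {K c u : ℝ}

theorem hasDerivAt_sqrt_mul_sq_add (h : 0 < K * (u ^ 2 + c)) :
    HasDerivAt (fun u => √(K * (u ^ 2 + c))) (K * u / √(K * (u ^ 2 + c))) u := by
  have hq : HasDerivAt (fun u => K * (u ^ 2 + c)) (K * (2 * u)) u := by
    simpa using ((hasDerivAt_pow 2 u).add_const c).const_mul K
  refine (hq.sqrt h.ne').congr_deriv ?_
  field_simp

theorem hasDerivAt_div_sqrt_mul_sq_add (k : ℝ) (h : 0 < K * (u ^ 2 + c)) :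
    HasDerivAt (fun u => k / √(K * (u ^ 2 + c))) (-(k * K * u) / √(K * (u ^ 2 + c)) ^ 3) u := by
  have hr : 0 < √(K * (u ^ 2 + c)) := sqrt_pos.2 h
  refine ((hasDerivAt_const u k).div (hasDerivAt_sqrt_mul_sq_add h) hr.ne').congr_deriv ?_
  field_simp
  ring

theorem hasDerivAt_mul_div_sqrt_mul_sq_add (h : 0 < K * (u ^ 2 + c)) :
    HasDerivAt (fun u => K * u / √(K * (u ^ 2 + c))) (K ^ 2 * c / √(K * (u ^ 2 + c)) ^ 3) u := by
  have hr : 0 < √(K * (u ^ 2 + c)) := sqrt_pos.2 h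
  have hr2 : √(K * (u ^ 2 + c)) ^ 2 = K * (u ^ 2 + c) := sq_sqrt h.le
  refine (((hasDerivAt_id' u).const_mul K).div (hasDerivAt_sqrt_mul_sq_add h) hr.ne').congr_deriv ?_
  field_simp
  linear_combination K * hr2

end SqrtQuadratic

theorem catenoid_radicand_pos {E a b : ℝ} (hE : E ≠ 0) (h : E ^ 2 < a ^ 2 + b ^ 2) :
    0 < E ^ 2 * (a ^ 2 + (b ^ 2 - E ^ 2)) := by
  have : 0 < a ^ 2 + (b ^ 2 - E ^ 2) := by linarith
  positivity

theorem catenoid_mse_identity {E a b r : ℝ} (hr : r ≠ 0)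
    (hr2 : r ^ 2 = E ^ 2 * (a ^ 2 + b ^ 2 - E ^ 2)) :
    (E ^ 2 * b / r + a) ^ 2 * ((E ^ 2) ^ 2 * (b ^ 2 - E ^ 2) / r ^ 3)
      + (E ^ 2 * a / r - b) ^ 2 * ((E ^ 2) ^ 2 * (a ^ 2 - E ^ 2) / r ^ 3)
      - 2 * (E ^ 2 * a / r - b) * (E ^ 2 * b / r + a) * (-(E ^ 2 * a * E ^ 2 * b) / r ^ 3) = 0 := by
  field_simp
  linear_combination (-(E ^ 6 * (a ^ 2 + b ^ 2))) * hr2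

/-- Pauls' catenoidal surfaces: for `E > 0`, the graph `f(x,y) = √(E²(x²+y²-E²))` satisfies
the minimal surface equation in ℍ¹,
`(f_y + x)² f_xx + (f_x - y)² f_yy - 2(f_x - y)(f_y + x) f_xy = 0`, wherever `x²+y² > E²`. -/
theorem catenoid_minimal (E : ℝ) (hE : 0 < E) (f fx fy fxx fyy fxy : ℝ → ℝ → ℝ)
    (hf : ∀ a b : ℝ, E^2 < a^2 + b^2 → f a b = Real.sqrt (E^2*(a^2 + b^2 - E^2)))
    (hfx : ∀ a b : ℝ, E^2 < a^2 + b^2 → HasDerivAt (fun u => f u b) (fx a b) a)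
    (hfy : ∀ a b : ℝ, E^2 < a^2 + b^2 → HasDerivAt (fun v => f a v) (fy a b) b)
    (hfxx : ∀ a b : ℝ, E^2 < a^2 + b^2 → HasDerivAt (fun u => fx u b) (fxx a b) a)
    (hfyy : ∀ a b : ℝ, E^2 < a^2 + b^2 → HasDerivAt (fun v => fy a v) (fyy a b) b)
    (hfxy : ∀ a b : ℝ, E^2 < a^2 + b^2 → HasDerivAt (fun v => fx a v) (fxy a b) b) :
    ∀ a b : ℝ, E^2 < a^2 + b^2 →
      (fy a b + a)^2 * fxx a b + (fx a b - b)^2 * fyy a b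
        - 2*(fx a b - b)*(fy a b + a)*fxy a b = 0 := by
  have pos_x {a b : ℝ} (h : E ^ 2 < a ^ 2 + b ^ 2) := catenoid_radicand_pos hE.ne' h
  have pos_y {a b : ℝ} (h : E ^ 2 < a ^ 2 + b ^ 2) :=
    catenoid_radicand_pos hE.ne' (by linarith : E ^ 2 < b ^ 2 + a ^ 2)
  have near_x {a b : ℝ} (h : E ^ 2 < a ^ 2 + b ^ 2) : ∀ᶠ u in 𝓝 a, E ^ 2 < u ^ 2 + b ^ 2 :=
    continuousAt_const.eventually_lt (by fun_prop) h
  have near_y {a b : ℝ} (h : E ^ 2 < a ^ 2 + b ^ 2) : ∀ᶠ v in 𝓝 b, E ^ 2 < a ^ 2 + v ^ 2 :=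
    continuousAt_const.eventually_lt (by fun_prop) h
  have hfx' (a b : ℝ) (h : E ^ 2 < a ^ 2 + b ^ 2) :
      fx a b = E ^ 2 * a / √(E ^ 2 * (a ^ 2 + (b ^ 2 - E ^ 2))) :=
    (hfx a b h).unique <| (hasDerivAt_sqrt_mul_sq_add (pos_x h)).congr_of_eventuallyEq <|
      (near_x h).mono fun u hu => (hf u b hu).trans <| by rw [add_sub_assoc]
  have hfy' (a b : ℝ) (h : E ^ 2 < a ^ 2 + b ^ 2) :
      fy a b = E ^ 2 * b / √(E ^ 2 * (b ^ 2 + (a ^ 2 - E ^ 2))) :=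
    (hfy a b h).unique <| (hasDerivAt_sqrt_mul_sq_add (pos_y h)).congr_of_eventuallyEq <|
      (near_y h).mono fun v hv => (hf a v hv).trans <| by dsimp only; congr 2; ring
  intro a b h
  have hfxx' := (hfxx a b h).unique <|
    (hasDerivAt_mul_div_sqrt_mul_sq_add (pos_x h)).congr_of_eventuallyEq <|
      (near_x h).mono fun u hu => hfx' u b hu
  have hfyy' := (hfyy a b h).unique <|
    (hasDerivAt_mul_div_sqrt_mul_sq_add (pos_y h)).congr_of_eventuallyEq <|
      (near_y h).mono fun v hv => hfy' a v hv
  have hfxy' := (hfxy a b h).unique <|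
    (hasDerivAt_div_sqrt_mul_sq_add (E ^ 2 * a) (pos_y h)).congr_of_eventuallyEq <|
      (near_y h).mono fun v hv => (hfx' a v hv).trans <| by dsimp only; congr 3; ring
  rw [hfx' a b h, hfy' a b h, hfxx', hfyy', hfxy', add_sub_left_comm (b ^ 2)]
  exact catenoid_mse_identity (sqrt_pos.2 (pos_x h)).ne' ((sq_sqrt (pos_x h).le).trans (by ring))
end
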